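/- There exists a universal constant C such that for every L the following holds. If B and B′ are bricks that are good with respect to a configuration η, with sails S and S′ respectively, and B points to B′, then |S ∩ S′| ≤ C·L. -/
import Mathlib


open Classical

/-- Sites of the three-dimensional lattice. -/
abbrev V3 : Type := Fin 3 → ℤ

/-- The unit vector in direction `j` (so `unitVec 0 = ê₁`, `unitVec 1 = ê₂`, `unitVec 2 = ê₃`). -/
def unitVec (j : Fin 3) : V3 := fun i => if i = j then 1 else 0

/-- Nearest-neighbour adjacency in ℤ³. -/
def Adj3 (x y : V3) : Prop := ∃ j : Fin 3, y = x + unitVec j ∨ y = x - unitVec j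

/-- A site is infected: susceptible and its state is infected. -/
def Infct (sus : Set V3) (η : V3 → Bool) (x : V3) : Prop := x ∈ sus ∧ η x = true

/-- The FA2f constraint at `x`: at least two nearest neighbours of `x` are susceptible
and infected. -/
def Constr (sus : Set V3) (η : V3 → Bool) (x : V3) : Prop :=
  2 ≤ {y : V3 | Adj3 x y ∧ Infct sus η y}.ncard

/-- `η^{X ← infected}`: the configuration equal to infected on `X` and to `η` off `X`. -/
noncomputable def infectOn (η : V3 → Bool) (X : Set V3) : V3 → Bool :=
  fun y => if y ∈ X then true else η y

/-- A move: a site together with the state it is set to (`true` = infected). -/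
abbrev Move3 : Type := V3 × Bool

/-- The configuration after applying the first `n` moves of `ms` to `η`. -/
def evolve (η : V3 → Bool) (ms : ℕ → Move3) : ℕ → (V3 → Bool)
  | 0 => η
  | n + 1 => Function.update (evolve η ms n) (ms n).1 (ms n).2

/-- The first `k` moves of `ms` form a legal sequence of moves from `η`. -/
def LegalSeq (sus : Set V3) (η : V3 → Bool) (ms : ℕ → Move3) (k : ℕ) : Prop :=
  ∀ i < k, (ms i).1 ∈ sus ∧ Constr sus (evolve η ms i) (ms i).1

/-- The dimensions `(4L, 16L, 32L)` of the standard brick. -/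
def dims (L : ℕ) : V3 := ![(4 * L : ℤ), (16 * L : ℤ), (32 * L : ℤ)]

/-- The standard brick `[0,4L) × [0,16L) × [0,32L)`. -/
def stdBrick (L : ℕ) : Set V3 := {x | ∀ i, 0 ≤ x i ∧ x i < dims L i}

/-- The base of the standard brick: its bottom half. -/
def stdBase (L : ℕ) : Set V3 := {x ∈ stdBrick L | x 2 < 16 * (L : ℤ)}

/-- The top of the standard brick: its upper half. -/
def stdTop (L : ℕ) : Set V3 := {x ∈ stdBrick L | 16 * (L : ℤ) ≤ x 2}

/-- Section `j` of the standard brick, `0 ≤ j ≤ 7`; sections `0,…,3` form the base. -/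
def stdSection (L j : ℕ) : Set V3 :=
  {x ∈ stdBrick L | 4 * (j : ℤ) * L ≤ x 2 ∧ x 2 < 4 * ((j : ℤ) + 1) * L}

/-- The tip of the standard brick. -/
def stdTip (L : ℕ) : Set V3 :=
  {x | 0 ≤ x 0 ∧ x 0 < 4 * (L : ℤ) ∧ 0 ≤ x 1 ∧ x 1 < 4 * (L : ℤ) ∧
       16 * (L : ℤ) ≤ x 2 ∧ x 2 < 32 * (L : ℤ)}

/-- The proto-brick `[0,4L) × [0,4L) × [0,2L)`. -/
def protoBrick (L : ℕ) : Set V3 :=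
  {x | 0 ≤ x 0 ∧ x 0 < 4 * (L : ℤ) ∧ 0 ≤ x 1 ∧ x 1 < 4 * (L : ℤ) ∧
       0 ≤ x 2 ∧ x 2 < 2 * (L : ℤ)}

/-- The cell of a proto-brick vertex. -/
def cell (v : V3) : Set V3 :=
  {y | y 0 = v 0 ∧ 4 * v 1 ≤ y 1 ∧ y 1 < 4 * v 1 + 4 ∧
       16 * v 2 ≤ y 2 ∧ y 2 < 16 * v 2 + 16}

/-- The layer `Λ_k = ℤ² × {k}`. -/
def stdLayer (k : ℤ) : Set V3 := {x | x 2 = k}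

/-- `A` is an oriented path from `{x 0 = 0}` to `{x 1 = 0}` with steps `ê₁` or `−ê₂`,
no three consecutive steps being equal. -/
def IsOrientedLayerPath (A : Set V3) : Prop :=
  ∃ (m : ℕ) (p : ℕ → V3),
    A = {x | ∃ j ≤ m, p j = x} ∧
    (p 0) 0 = 0 ∧ (p m) 1 = 0 ∧
    (∀ j < m, p (j + 1) = p j + unitVec 0 ∨ p (j + 1) = p j - unitVec 1) ∧
    (∀ j, j + 3 ≤ m →
      ¬(p (j + 1) - p j = p (j + 2) - p (j + 1) ∧
        p (j + 2) - p (j + 1) = p (j + 3) - p (j + 2)))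

/-- The standard brick is good, for a susceptible set `sus` and configuration `η`
(both given in the standard brick's coordinates), with sail `sail`. -/
def StandardGood (L : ℕ) (sus : Set V3) (η : V3 → Bool) (sail : Set V3) : Prop :=
  ∃ Shat : Set V3, Shat ⊆ protoBrick L ∧
    sail = ⋃ v ∈ Shat, cell v ∧
    (∀ v ∈ Shat, ∀ w ∈ ({v, v + unitVec 2, v - unitVec 0 - unitVec 1 + unitVec 2} : Set V3) ∩
      protoBrick L, cell w ⊆ sus) ∧
    (∀ v ∈ Shat, v 2 ≠ 0 → (v - unitVec 2 ∈ Shat ∨ v + unitVec 0 + unitVec 1 - unitVec 2 ∈ Shat)) ∧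
    (∀ v ∈ Shat, 3 * (L : ℤ) < v 0 + v 1 + v 2 ∧ v 0 + v 1 + v 2 < 4 * (L : ℤ)) ∧
    (∀ k : ℤ, 0 ≤ k → k ≤ 2 * (L : ℤ) - 1 → IsOrientedLayerPath (Shat ∩ stdLayer k)) ∧
    (![((L : ℤ) + 1), (4 * L + 4 : ℤ), (16 * L : ℤ)] ∈ sail) ∧
    (∀ k : ℤ, 0 ≤ k → k < 32 * (L : ℤ) - 1 →
      ∃ y ∈ sail ∩ stdLayer k, Infct sus η (y + unitVec 2))

/-- A (general) brick: the image of the standard brick under a translation composed with a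
(signed) permutation of the coordinates. -/
structure BrickMap (L : ℕ) where
  perm : Equiv.Perm (Fin 3)
  neg : Fin 3 → Bool
  t : V3

/-- The affine map from standard-brick coordinates to ambient coordinates. -/
def BrickMap.apply {L : ℕ} (b : BrickMap L) (x : V3) : V3 :=
  fun i => b.t i + (if b.neg i then -x (b.perm.symm i) else x (b.perm.symm i))

/-- The sites of a brick. -/
def BrickMap.sites {L : ℕ} (b : BrickMap L) : Set V3 := b.apply '' stdBrick L

/-- The anchor of a brick. -/
def BrickMap.anchor {L : ℕ} (b : BrickMap L) : V3 := b.apply 0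

/-- The flag of a brick. -/
def BrickMap.flag {L : ℕ} (b : BrickMap L) : V3 := b.apply (dims L)

/-- The translate of a brick by `z`. -/
def BrickMap.translate {L : ℕ} (b : BrickMap L) (z : V3) : BrickMap L :=
  ⟨b.perm, b.neg, b.t + z⟩

/-- The brick `b` is good with respect to `(sus, η)` with sail `sail₀`
(in standard-brick coordinates). -/
def GoodBrick {L : ℕ} (b : BrickMap L) (sus : Set V3) (η : V3 → Bool)
    (sail₀ : Set V3) : Prop :=
  StandardGood L (b.apply ⁻¹' sus) (fun x => η (b.apply x)) sail₀

/-- Layer `i` of the sail `sail₀` of brick `b`, as a set of ambient sites. -/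
def sailLayer {L : ℕ} (b : BrickMap L) (sail₀ : Set V3) (i : ℤ) : Set V3 :=
  b.apply '' (sail₀ ∩ stdLayer i)

/-- The ambient sail of the brick `b`. -/
def sailSites {L : ℕ} (b : BrickMap L) (sail₀ : Set V3) : Set V3 := b.apply '' sail₀

/-- The ambient thick sail `S̄ = S ∪ ((S + e₃) ∩ B)` of the brick `b`. -/
def thickSail {L : ℕ} (b : BrickMap L) (sail₀ : Set V3) : Set V3 :=
  b.apply '' (sail₀ ∪ (((fun y => y + unitVec 2) '' sail₀) ∩ stdBrick L))

/-- The boundary of the brick `b`: its sites having a nearest neighbour outside the brick. -/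
def brickBoundary {L : ℕ} (b : BrickMap L) : Set V3 :=
  {y ∈ b.sites | ∃ z : V3, Adj3 y z ∧ z ∉ b.sites}

/-- A set `A` of sites is connected (under nearest-neighbour adjacency within `A`). -/
def SetConn (A : Set V3) : Prop :=
  ∀ a ∈ A, ∀ c ∈ A, ∃ n : ℕ, ∃ p : ℕ → V3, p 0 = a ∧ p n = c ∧ (∀ i ≤ n, p i ∈ A) ∧
    ∀ i < n, Adj3 (p i) (p (i + 1))

/-- `V` separates the brick `b` into the two connected components `Bm` and `Bp`,
`Bp` containing the top of `b`. -/
def Separates {L : ℕ} (b : BrickMap L) (V Bp Bm : Set V3) : Prop :=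
  b.sites \ V = Bp ∪ Bm ∧ Disjoint Bp Bm ∧ SetConn Bp ∧ SetConn Bm ∧
  (∀ x ∈ Bp, ∀ y ∈ Bm, ¬Adj3 x y) ∧ b.apply '' stdTop L ⊆ Bp

/-- `b ▷_k b'`: the tip of `b` coincides exactly with section `k` of (the base of) `b'`. -/
def PointsAt {L : ℕ} (b b' : BrickMap L) (k : ℕ) : Prop :=
  b.apply '' stdTip L = b'.apply '' stdSection L k

/-- `b` points to `b'`: the tip of `b` coincides with one of the four sections of the
base of `b'`. -/
def Points {L : ℕ} (b b' : BrickMap L) : Prop := ∃ k < 4, PointsAt b b' k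

namespace SailProof

lemma fin3 (i : Fin 3) : i = 0 ∨ i = 1 ∨ i = 2 := by
  fin_cases i <;> simp

/-- The sign of a brick map in ambient direction `i`. -/
def bsgn {L : ℕ} (b : BrickMap L) (i : Fin 3) : ℤ := if b.neg i then -1 else 1

lemma bsgn_cases {L : ℕ} (b : BrickMap L) (i : Fin 3) : bsgn b i = 1 ∨ bsgn b i = -1 := by
  unfold bsgn; split <;> simp

lemma bsgn_mul_self {L : ℕ} (b : BrickMap L) (i : Fin 3) : bsgn b i * bsgn b i = 1 := by
  unfold bsgn; split <;> norm_num

lemma apply_eq {L : ℕ} (b : BrickMap L) (x : V3) (i : Fin 3) :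
    b.apply x i = b.t i + bsgn b i * x (b.perm.symm i) := by
  unfold BrickMap.apply bsgn; split <;> ring

/-- Explicit inverse of a brick map. -/
def binv {L : ℕ} (b : BrickMap L) (y : V3) : V3 :=
  fun j => bsgn b (b.perm j) * (y (b.perm j) - b.t (b.perm j))

lemma binv_apply {L : ℕ} (b : BrickMap L) (x : V3) : binv b (b.apply x) = x := by
  funext j
  unfold binv
  rw [apply_eq, Equiv.symm_apply_apply]
  have h := bsgn_mul_self b (b.perm j)
  have : bsgn b (b.perm j) * (b.t (b.perm j) + bsgn b (b.perm j) * x j - b.t (b.perm j))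
      = (bsgn b (b.perm j) * bsgn b (b.perm j)) * x j := by ring
  rw [this, h, one_mul]

lemma comp_coord {L : ℕ} (b b' : BrickMap L) (x x' : V3) (h : b.apply x = b'.apply x')
    (j : Fin 3) :
    x' j = (bsgn b' (b'.perm j) * bsgn b (b'.perm j)) * x (b.perm.symm (b'.perm j))
      + bsgn b' (b'.perm j) * (b.t (b'.perm j) - b'.t (b'.perm j)) := by
  have h1 := congrFun h (b'.perm j)
  rw [apply_eq, apply_eq, Equiv.symm_apply_apply] at h1
  have h2 := bsgn_mul_self b' (b'.perm j)
  have h3 : bsgn b' (b'.perm j) * (b'.t (b'.perm j) + bsgn b' (b'.perm j) * x' j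
      - b'.t (b'.perm j)) = (bsgn b' (b'.perm j) * bsgn b' (b'.perm j)) * x' j := by ring
  calc x' j = (bsgn b' (b'.perm j) * bsgn b' (b'.perm j)) * x' j := by rw [h2, one_mul]
    _ = bsgn b' (b'.perm j) * (b'.t (b'.perm j) + bsgn b' (b'.perm j) * x' j - b'.t (b'.perm j)) := by rw [h3]
    _ = bsgn b' (b'.perm j) * (b.t (b'.perm j) + bsgn b (b'.perm j) * x (b.perm.symm (b'.perm j)) - b'.t (b'.perm j)) := by rw [h1]
    _ = _ := by ring

lemma unitVec_coord (j i : Fin 3) : unitVec j i = if i = j then 1 else 0 := rfl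

lemma cell_mem {v x : V3} (h : x ∈ cell v) :
    x 0 = v 0 ∧ 4 * v 1 ≤ x 1 ∧ x 1 < 4 * v 1 + 4 ∧ 16 * v 2 ≤ x 2 ∧ x 2 < 16 * v 2 + 16 := h

end SailProof
namespace SailProof

/-- A half-open box in `ℤ³`. -/
def boxSet (lo hi : V3) : Set V3 := {x | ∀ j, lo j ≤ x j ∧ x j < hi j}

lemma boxSet_finite (lo hi : V3) : (boxSet lo hi).Finite := by
  have h : boxSet lo hi ⊆ Set.pi Set.univ (fun j => Set.Ico (lo j) (hi j)) := by
    intro x hx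
    rw [Set.mem_pi]
    intro j _
    exact ⟨(hx j).1, (hx j).2⟩
  exact Set.Finite.subset (Set.Finite.pi (fun j => Set.finite_Ico _ _)) h

lemma stdTip_eq (L : ℕ) :
    stdTip L = boxSet ![0, 0, 16*L] ![4*L, 4*L, 32*L] := by
  ext x
  constructor
  · rintro ⟨h1, h2, h3, h4, h5, h6⟩ j
    rcases fin3 j with rfl | rfl | rfl <;> simp <;> omega
  · intro h
    have h0 := h 0; have h1 := h 1; have h2 := h 2
    simp at h0 h1 h2
    exact ⟨h0.1, h0.2, h1.1, h1.2, h2.1, h2.2⟩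

lemma stdSection_eq (L k : ℕ) (hk : k < 4) :
    stdSection L k = boxSet ![0, 0, 4*k*L] ![4*L, 16*L, 4*(k+1)*L] := by
  have hkk : ((k:ℤ)+1) ≤ 4 := by exact_mod_cast hk
  have key : 4*((k:ℤ)+1)*(L:ℤ) ≤ 16*L := by nlinarith [Int.natCast_nonneg L]
  ext x
  constructor
  · rintro ⟨hbrick, hlo, hhi⟩ j
    have h0 := hbrick 0; have h1 := hbrick 1; have h2 := hbrick 2
    simp [dims] at h0 h1 h2
    rcases fin3 j with rfl | rfl | rfl <;> simp
    · exact h0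
    · exact h1
    · push_cast at hlo hhi ⊢; constructor <;> linarith
  · intro h
    have h0 := h 0; have h1 := h 1; have h2 := h 2
    simp at h0 h1 h2
    have hk0 : 0 ≤ 4*(k:ℤ)*L := by positivity
    refine ⟨fun i => ?_, ?_, ?_⟩
    · rcases fin3 i with rfl | rfl | rfl <;> simp [dims]
      · exact h0
      · exact h1
      · constructor
        · linarith [h2.1]
        · have : 4*((k:ℤ)+1)*(L:ℤ) ≤ 32*L := by nlinarith [Int.natCast_nonneg L]
          push_cast at h2 ⊢; linarith [h2.2]
    · push_cast at h2 ⊢; linarith [h2.1]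
    · push_cast at h2 ⊢; linarith [h2.2]

lemma image_coord {L : ℕ} (b : BrickMap L) (lo hi : V3) (hlh : ∀ j, lo j < hi j) (i : Fin 3) :
    ∃ A : ℤ, (fun y => y i) '' (b.apply '' boxSet lo hi)
      = Set.Ico A (A + (hi (b.perm.symm i) - lo (b.perm.symm i))) := by
  set j0 := b.perm.symm i with hj0
  rcases bsgn_cases b i with hs | hs
  · refine ⟨b.t i + lo j0, ?_⟩
    ext z
    simp only [Set.mem_image, Set.mem_Ico]
    constructor
    · rintro ⟨y, ⟨x, hx, rfl⟩, rfl⟩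
      rw [apply_eq, hs, ← hj0]
      have := hx j0
      constructor <;> omega
    · rintro ⟨hz1, hz2⟩
      refine ⟨_, ⟨Function.update (fun j => lo j) j0 (z - b.t i), ?_, rfl⟩, ?_⟩
      · intro j
        by_cases hj : j = j0
        · subst hj; rw [Function.update_self]; omega
        · rw [Function.update_of_ne hj]; exact ⟨le_refl _, hlh j⟩
      · rw [apply_eq, hs, ← hj0, Function.update_self]; ring
  · refine ⟨b.t i - hi j0 + 1, ?_⟩
    ext z
    simp only [Set.mem_image, Set.mem_Ico]
    constructor
    · rintro ⟨y, ⟨x, hx, rfl⟩, rfl⟩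
      rw [apply_eq, hs, ← hj0]
      have := hx j0
      constructor <;> omega
    · rintro ⟨hz1, hz2⟩
      refine ⟨_, ⟨Function.update (fun j => lo j) j0 (b.t i - z), ?_, rfl⟩, ?_⟩
      · intro j
        by_cases hj : j = j0
        · subst hj; rw [Function.update_self]; omega
        · rw [Function.update_of_ne hj]; exact ⟨le_refl _, hlh j⟩
      · rw [apply_eq, hs, ← hj0, Function.update_self]; ring

lemma Ico_len {A B l l' : ℤ} (hl : 0 < l) (h : Set.Ico A (A + l) = Set.Ico B (B + l')) :
    l = l' := by
  have h1 : A ∈ Set.Ico B (B + l') := by rw [← h]; exact ⟨le_refl _, by omega⟩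
  simp only [Set.mem_Ico] at h1
  have h2 : B ∈ Set.Ico A (A + l) := by rw [h]; exact ⟨le_refl _, by omega⟩
  simp only [Set.mem_Ico] at h2
  have h3 : A + l - 1 ∈ Set.Ico B (B + l') := by rw [← h]; exact ⟨by omega, by omega⟩
  simp only [Set.mem_Ico] at h3
  have h4 : B + l' - 1 ∈ Set.Ico A (A + l) := by rw [h]; exact ⟨by omega, by omega⟩
  simp only [Set.mem_Ico] at h4
  omega

lemma tip_sec_perm {L k : ℕ} (hL : 1 ≤ L) (hk : k < 4) {b b' : BrickMap L}
    (h : b.apply '' stdTip L = b'.apply '' stdSection L k) :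
    b.perm.symm (b'.perm 1) = 2 := by
  have hLz : (1:ℤ) ≤ (L:ℤ) := by exact_mod_cast hL
  have htip : ∀ j : Fin 3, (![0, 0, 16*L] : V3) j < (![4*L, 4*L, 32*L] : V3) j := by
    intro j; rcases fin3 j with rfl | rfl | rfl <;> simp <;> omega
  have hsec : ∀ j : Fin 3, (![0, 0, 4*k*L] : V3) j < (![4*L, 16*L, 4*(k+1)*L] : V3) j := by
    intro j; rcases fin3 j with rfl | rfl | rfl <;> simp
    · omega
    · omega
    · have : (4*(k:ℤ)*L) + 4*L = 4*((k:ℤ)+1)*L := by ring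
      push_cast
      nlinarith [Int.natCast_nonneg k]
  rw [stdTip_eq, stdSection_eq L k hk] at h
  set i := b'.perm 1 with hi
  obtain ⟨A, hA⟩ := image_coord b _ _ htip i
  obtain ⟨B, hB⟩ := image_coord b' _ _ hsec i
  have him : (fun y => y i) '' (b.apply '' boxSet ![0, 0, 16*L] ![4*L, 4*L, 32*L])
      = (fun y => y i) '' (b'.apply '' boxSet ![0, 0, 4*k*L] ![4*L, 16*L, 4*(k+1)*L]) := by
    rw [h]
  rw [hA, hB] at him
  have hpos : 0 < (![4*L, 4*L, 32*L] : V3) (b.perm.symm i) - (![0, 0, 16*L] : V3) (b.perm.symm i) := by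
    rcases fin3 (b.perm.symm i) with h0 | h0 | h0 <;> rw [h0] <;> simp <;> omega
  have hlen := Ico_len hpos him
  have hsymm : b'.perm.symm i = 1 := by rw [hi, Equiv.symm_apply_apply]
  rw [hsymm] at hlen
  rcases fin3 (b.perm.symm i) with h0 | h0 | h0 <;> rw [h0] at hlen <;> simp at hlen <;> omega

end SailProof
namespace SailProof

/-- The structural data of a good brick's sail that we use. -/
structure SurfData (L : ℕ) (S : Set V3) : Prop where
  proto : S ⊆ protoBrick L
  parent : ∀ v ∈ S, v 2 ≠ 0 → (v - unitVec 2 ∈ S ∨ v + unitVec 0 + unitVec 1 - unitVec 2 ∈ S)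
  path : ∀ k : ℤ, 0 ≤ k → k ≤ 2*(L:ℤ) - 1 → IsOrientedLayerPath (S ∩ stdLayer k)

lemma proto_mem {L : ℕ} {S : Set V3} (hs : SurfData L S) {v : V3} (hv : v ∈ S) :
    0 ≤ v 0 ∧ v 0 < 4*(L:ℤ) ∧ 0 ≤ v 1 ∧ v 1 < 4*(L:ℤ) ∧ 0 ≤ v 2 ∧ v 2 < 2*(L:ℤ) :=
  hs.proto hv

lemma step_coords {p q : V3} (h : q = p + unitVec 0 ∨ q = p - unitVec 1) :
    (q 0 = p 0 + 1 ∧ q 1 = p 1 ∧ q 2 = p 2) ∨ (q 0 = p 0 ∧ q 1 = p 1 - 1 ∧ q 2 = p 2) := by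
  rcases h with h | h <;> subst h
  · left
    refine ⟨?_, ?_, ?_⟩ <;> simp [unitVec]
  · right
    refine ⟨?_, ?_, ?_⟩ <;> simp [unitVec]

/-- Same-layer comparison facts for two sail vertices. -/
lemma SurfData.same_layer {L : ℕ} {S : Set V3} (hs : SurfData L S) {v w : V3}
    (hv : v ∈ S) (hw : w ∈ S) (hvw : v 2 = w 2) :
    (v 0 - v 1 = w 0 - w 1 → v = w) ∧
    ((v 0 - v 1 ≤ w 0 - w 1 ∧ v 0 ≤ w 0 ∧ w 1 ≤ v 1 ∧
        (w 0 - w 1) - (v 0 - v 1) ≤ 3*(w 0 - v 0) + 2 ∧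
        (w 0 - w 1) - (v 0 - v 1) ≤ 3*(v 1 - w 1) + 2) ∨
     (w 0 - w 1 ≤ v 0 - v 1 ∧ w 0 ≤ v 0 ∧ v 1 ≤ w 1 ∧
        (v 0 - v 1) - (w 0 - w 1) ≤ 3*(v 0 - w 0) + 2 ∧
        (v 0 - v 1) - (w 0 - w 1) ≤ 3*(w 1 - v 1) + 2)) := by
  obtain ⟨_, _, _, _, hk0, hk1⟩ := proto_mem hs hv
  obtain ⟨m, p, hA, hp0, hpm, hstep, h3⟩ := hs.path (v 2) hk0 (by omega)
  have hst : ∀ j, j < m →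
      ((p (j+1)) 0 = p j 0 + 1 ∧ (p (j+1)) 1 = p j 1 ∧ (p (j+1)) 2 = p j 2) ∨
      ((p (j+1)) 0 = p j 0 ∧ (p (j+1)) 1 = p j 1 - 1 ∧ (p (j+1)) 2 = p j 2) :=
    fun j hj => step_coords (hstep j hj)
  have mono : ∀ i j : ℕ, i ≤ j → j ≤ m →
      p i 0 ≤ p j 0 ∧ p j 1 ≤ p i 1 ∧ (p j 0 - p j 1) = (p i 0 - p i 1) + ((j:ℤ) - (i:ℤ)) := by
    intro i j hij hjm
    induction j, hij using Nat.le_induction with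
    | base => omega
    | succ j hij ih =>
      have hj : j < m := by omega
      have ihh := ih (by omega)
      rcases hst j hj with ⟨e0, e1, _⟩ | ⟨e0, e1, _⟩ <;> rw [e0, e1] <;> push_cast <;> omega
  have h3' : ∀ j, j + 3 ≤ m → p j 0 + 1 ≤ p (j+3) 0 ∧ p (j+3) 1 + 1 ≤ p j 1 := by
    intro j hj
    have c1 := hst j (by omega)
    have c2 := hst (j+1) (by omega)
    have c3 := hst (j+2) (by omega)
    rw [(by omega : j+1+1 = j+2)] at c2
    rw [(by omega : j+2+1 = j+3)] at c3
    have hne := h3 j hj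
    rcases c1 with ⟨a0,a1,a2⟩|⟨a0,a1,a2⟩ <;> rcases c2 with ⟨b0,b1,b2⟩|⟨b0,b1,b2⟩ <;>
      rcases c3 with ⟨d0,d1,d2⟩|⟨d0,d1,d2⟩ <;>
      first
        | omega
        | (exfalso; apply hne;
           constructor <;> (funext i; rcases fin3 i with rfl|rfl|rfl <;>
             simp only [Pi.sub_apply] <;> omega))
  have quant : ∀ n : ℕ, ∀ i : ℕ, i + n ≤ m →
      (n:ℤ) ≤ 3*(p (i+n) 0 - p i 0) + 2 ∧ (n:ℤ) ≤ 3*(p i 1 - p (i+n) 1) + 2 := by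
    intro n
    induction n using Nat.strong_induction_on with
    | _ n ih =>
      intro i hi
      by_cases hn : n ≤ 2
      · have hm := mono i (i+n) (by omega) (by omega)
        push_cast at hm ⊢
        omega
      · have h3i := h3' i (by omega)
        have ihn := ih (n-3) (by omega) (i+3) (by omega)
        rw [(by omega : i+3+(n-3) = i+n)] at ihn
        push_cast at ihn ⊢
        omega
  have hmem : ∀ z, z ∈ S → z 2 = v 2 → ∃ j, j ≤ m ∧ p j = z := by
    intro z hz h2
    have hz2 : z ∈ S ∩ stdLayer (v 2) := ⟨hz, h2⟩
    rw [hA] at hz2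
    obtain ⟨j, hj, hpj⟩ := hz2
    exact ⟨j, hj, hpj⟩
  obtain ⟨i, him, hpi⟩ := hmem v hv rfl
  obtain ⟨j, hjm, hpj⟩ := hmem w hw hvw.symm
  have hoi := mono 0 i (by omega) (by omega)
  have hoj := mono 0 j (by omega) (by omega)
  rw [hpi] at hoi
  rw [hpj] at hoj
  constructor
  · intro heq
    have hij : i = j := by omega
    rw [← hpi, ← hpj, hij]
  · rcases le_total i j with hij | hij
    · left
      have hm := mono i j hij hjm
      have hq := quant (j - i) i (by omega)
      rw [(by omega : i+(j-i) = j)] at hq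
      rw [hpi, hpj] at hm hq
      push_cast at hq
      omega
    · right
      have hm := mono j i hij him
      have hq := quant (i - j) j (by omega)
      rw [(by omega : j+(i-j) = i)] at hq
      rw [hpi, hpj] at hm hq
      push_cast at hq
      omega

end SailProof
namespace SailProof

lemma sub_u2_coords (v : V3) :
    (v - unitVec 2) 0 = v 0 ∧ (v - unitVec 2) 1 = v 1 ∧ (v - unitVec 2) 2 = v 2 - 1 := by
  refine ⟨?_, ?_, ?_⟩ <;> simp [unitVec]

lemma add_u01_coords (v : V3) :
    (v + unitVec 0 + unitVec 1 - unitVec 2) 0 = v 0 + 1 ∧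
    (v + unitVec 0 + unitVec 1 - unitVec 2) 1 = v 1 + 1 ∧
    (v + unitVec 0 + unitVec 1 - unitVec 2) 2 = v 2 - 1 := by
  refine ⟨?_, ?_, ?_⟩ <;> simp [unitVec]

lemma SurfData.ancestor_aux {L : ℕ} {S : Set V3} (hs : SurfData L S) :
    ∀ n : ℕ, ∀ v ∈ S, ∀ k : ℤ, 0 ≤ k → v 2 - k = (n : ℤ) →
      ∃ θ : ℤ, 0 ≤ θ ∧ θ ≤ v 2 - k ∧
        ∃ w ∈ S, w 2 = k ∧ w 0 = v 0 + θ ∧ w 1 = v 1 + θ := by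
  intro n
  induction n with
  | zero =>
    intro v hv k hk h
    exact ⟨0, le_refl _, by omega, v, hv, by omega, by omega, by omega⟩
  | succ n ih =>
    intro v hv k hk h
    have h2 : v 2 ≠ 0 := by push_cast at h; omega
    rcases hs.parent v hv h2 with hp | hp
    · obtain ⟨c0, c1, c2⟩ := sub_u2_coords v
      obtain ⟨θ, hθ0, hθ1, w, hw, hw2, hw0, hw1⟩ :=
        ih _ hp k hk (by rw [c2]; push_cast at h ⊢; omega)
      rw [c2] at hθ1
      rw [c0] at hw0
      rw [c1] at hw1
      exact ⟨θ, hθ0, by omega, w, hw, hw2, hw0, hw1⟩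
    · obtain ⟨c0, c1, c2⟩ := add_u01_coords v
      obtain ⟨θ, hθ0, hθ1, w, hw, hw2, hw0, hw1⟩ :=
        ih _ hp k hk (by rw [c2]; push_cast at h ⊢; omega)
      rw [c2] at hθ1
      rw [c0] at hw0
      rw [c1] at hw1
      exact ⟨θ + 1, by omega, by omega, w, hw, hw2, by omega, by omega⟩

/-- Cross-layer comparison: `v` in a lower (or equal) layer than `w`. -/
lemma SurfData.cross {L : ℕ} {S : Set V3} (hs : SurfData L S) {v w : V3}
    (hv : v ∈ S) (hw : w ∈ S) (hk : v 2 ≤ w 2) :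
    ∃ θ : ℤ, 0 ≤ θ ∧ θ ≤ w 2 - v 2 ∧
      ((v 0 - v 1 ≤ w 0 - w 1 ∧ v 0 ≤ w 0 + θ ∧ w 1 + θ ≤ v 1 ∧
          (w 0 - w 1) - (v 0 - v 1) ≤ 3*((w 0 + θ) - v 0) + 2 ∧
          (w 0 - w 1) - (v 0 - v 1) ≤ 3*(v 1 - (w 1 + θ)) + 2) ∨
       (w 0 - w 1 ≤ v 0 - v 1 ∧ w 0 + θ ≤ v 0 ∧ v 1 ≤ w 1 + θ ∧
          (v 0 - v 1) - (w 0 - w 1) ≤ 3*(v 0 - (w 0 + θ)) + 2 ∧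
          (v 0 - v 1) - (w 0 - w 1) ≤ 3*((w 1 + θ) - v 1) + 2)) := by
  obtain ⟨_, _, _, _, hv20, _⟩ := proto_mem hs hv
  obtain ⟨θ, hθ0, hθ1, w', hw', hw'2, hw'0, hw'1⟩ :=
    hs.ancestor_aux (w 2 - v 2).toNat w hw (v 2) hv20 (by omega)
  have hlay : v 2 = w' 2 := by omega
  have hsl := hs.same_layer hv hw' hlay
  refine ⟨θ, hθ0, hθ1, ?_⟩
  rcases hsl.2 with hcase | hcase
  · left
    rw [hw'0, hw'1] at hcase
    constructor
    · omega
    · exact ⟨by omega, by omega, by omega, by omega⟩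
  · right
    rw [hw'0, hw'1] at hcase
    exact ⟨by omega, by omega, by omega, by omega, by omega⟩

/-- Two sail vertices in the same layer with the same anti-diagonal offset coincide. -/
lemma SurfData.offset_inj {L : ℕ} {S : Set V3} (hs : SurfData L S) {v w : V3}
    (hv : v ∈ S) (hw : w ∈ S) (hvw : v 2 = w 2) (ho : v 0 - v 1 = w 0 - w 1) : v = w :=
  (hs.same_layer hv hw hvw).1 ho

end SailProof
namespace SailProof

lemma goodExtract {L : ℕ} {b : BrickMap L} {sus : Set V3} {η : V3 → Bool} {sail₀ : Set V3}
    (hb : GoodBrick b sus η sail₀) :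
    ∃ Shat : Set V3, SurfData L Shat ∧
      (∀ x ∈ sail₀, ∃ v ∈ Shat, x ∈ cell v) ∧ 3 ≤ (L:ℤ) := by
  obtain ⟨Shat, hproto, hsail, _, hparent, hband, hpath, hpt, _⟩ := hb
  have hsub : ∀ x ∈ sail₀, ∃ v ∈ Shat, x ∈ cell v := by
    intro x hx
    rw [hsail] at hx
    simpa using hx
  obtain ⟨v, hv, hcell⟩ := hsub _ hpt
  obtain ⟨hc0, hc1a, hc1b, hc2a, hc2b⟩ := cell_mem hcell
  simp at hc0 hc1a hc1b hc2a hc2b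
  have hbd := hband v hv
  refine ⟨Shat, ⟨hproto, hparent, hpath⟩, hsub, by omega⟩

/-- A solution of the sail-intersection problem. -/
def Sol {L : ℕ} (b b' : BrickMap L) (Sh Sh' : Set V3) (y : V3) (v v' : V3) : Prop :=
  v ∈ Sh ∧ v' ∈ Sh' ∧ ∃ x x', x ∈ cell v ∧ x' ∈ cell v' ∧ y = b.apply x ∧ y = b'.apply x'

lemma ncard_le_mul_of_fiber {α β : Type*} (S : Set α) (f : α → β) (hS : S.Finite) (n : ℕ)
    (hfib : ∀ c : β, (S ∩ f ⁻¹' {c}).ncard ≤ n) : S.ncard ≤ n * (f '' S).ncard := by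
  classical
  have him : (f '' S).Finite := hS.image f
  have h1 : hS.toFinset ⊆ him.toFinset.biUnion
      (fun c => hS.toFinset.filter (fun a => f a = c)) := by
    intro a ha
    simp only [Finset.mem_biUnion, Set.Finite.mem_toFinset, Finset.mem_filter] at *
    exact ⟨f a, ⟨a, ha, rfl⟩, ha, rfl⟩
  have h2 := Finset.card_le_card h1
  have h3 := Finset.card_biUnion_le (s := him.toFinset)
    (t := fun c => hS.toFinset.filter (fun a => f a = c))
  have h4 : ∀ c ∈ him.toFinset, (hS.toFinset.filter (fun a => f a = c)).card ≤ n := by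
    intro c _
    have he : ((hS.toFinset.filter (fun a => f a = c)) : Set α) = S ∩ f ⁻¹' {c} := by
      ext a
      simp [Set.Finite.mem_toFinset]
    have := hfib c
    rw [← he, Set.ncard_coe_finset] at this
    exact this
  have h5 : (him.toFinset.biUnion (fun c => hS.toFinset.filter (fun a => f a = c))).card
      ≤ him.toFinset.card * n := by
    calc _ ≤ ∑ c ∈ him.toFinset, (hS.toFinset.filter (fun a => f a = c)).card := h3
      _ ≤ ∑ _c ∈ him.toFinset, n := Finset.sum_le_sum h4
      _ = him.toFinset.card * n := by rw [Finset.sum_const, smul_eq_mul]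
  rw [Set.ncard_eq_toFinset_card _ hS, Set.ncard_eq_toFinset_card _ him]
  calc hS.toFinset.card ≤ _ := h2
    _ ≤ him.toFinset.card * n := h5
    _ = n * him.toFinset.card := Nat.mul_comm _ _

lemma ncard_box_capture {α : Type*} (S : Set α) (f g h k : α → ℤ) (m : ℕ)
    (hinj : Set.InjOn (fun a => (f a, g a, h a, k a)) S)
    (hbd : ∀ a ∈ S, ∀ b ∈ S, f a - f b ≤ m ∧ g a - g b ≤ m ∧ h a - h b ≤ m ∧ k a - k b ≤ m) :
    S.ncard ≤ (2*m+1)^4 := by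
  classical
  rcases S.eq_empty_or_nonempty with rfl | ⟨a0, ha0⟩
  · simp
  set T : Finset (ℤ × ℤ × ℤ × ℤ) :=
    Finset.Icc (f a0 - m) (f a0 + m) ×ˢ (Finset.Icc (g a0 - m) (g a0 + m) ×ˢ
      (Finset.Icc (h a0 - m) (h a0 + m) ×ˢ Finset.Icc (k a0 - m) (k a0 + m))) with hT
  have hmaps : ∀ a ∈ S, (f a, g a, h a, k a) ∈ (T : Set (ℤ × ℤ × ℤ × ℤ)) := by
    intro a ha
    have h1 := hbd a ha a0 ha0
    have h2 := hbd a0 ha0 a ha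
    simp only [hT, Finset.coe_product, Set.mem_prod, Finset.mem_coe, Finset.mem_Icc]
    refine ⟨by omega, by omega, by omega, by omega⟩
  have := Set.ncard_le_ncard_of_injOn _ hmaps hinj (Finset.finite_toSet T)
  rw [Set.ncard_coe_finset] at this
  refine le_trans this ?_
  rw [hT]
  rw [Finset.card_product, Finset.card_product, Finset.card_product]
  rw [Int.card_Icc, Int.card_Icc, Int.card_Icc, Int.card_Icc]
  have : (f a0 + m + 1 - (f a0 - m)).toNat = 2*m+1 := by omega
  rw [this]
  have : (g a0 + m + 1 - (g a0 - m)).toNat = 2*m+1 := by omega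
  rw [this]
  have : (h a0 + m + 1 - (h a0 - m)).toNat = 2*m+1 := by omega
  rw [this]
  have : (k a0 + m + 1 - (k a0 - m)).toNat = 2*m+1 := by omega
  rw [this]
  exact le_of_eq (by ring)

lemma cell_finite (v : V3) : (cell v).Finite := by
  have h : cell v ⊆ boxSet ![v 0, 4*v 1, 16*v 2] ![v 0 + 1, 4*v 1 + 4, 16*v 2 + 16] := by
    intro x hx
    obtain ⟨h0, h1, h2, h3, h4⟩ := cell_mem hx
    intro j
    rcases fin3 j with rfl | rfl | rfl <;> simp <;> omega
  exact (boxSet_finite _ _).subset h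

lemma cell_ncard (v : V3) : (cell v).ncard ≤ 64 := by
  classical
  have hmaps : ∀ x ∈ cell v, ((x 1, x 2) : ℤ × ℤ) ∈
      ((Finset.Ico (4*v 1) (4*v 1+4) ×ˢ Finset.Ico (16*v 2) (16*v 2+16) : Finset (ℤ × ℤ)) :
        Set (ℤ × ℤ)) := by
    intro x hx
    obtain ⟨h0, h1, h2, h3, h4⟩ := cell_mem hx
    simp only [Finset.coe_product, Set.mem_prod, Finset.mem_coe, Finset.mem_Ico]
    exact ⟨⟨h1, h2⟩, ⟨h3, h4⟩⟩
  have hinj : Set.InjOn (fun x : V3 => ((x 1, x 2) : ℤ × ℤ)) (cell v) := by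
    intro x hx y hy hxy
    have e1 : x 1 = y 1 := congrArg Prod.fst hxy
    have e2 : x 2 = y 2 := congrArg Prod.snd hxy
    funext j
    rcases fin3 j with rfl | rfl | rfl
    · rw [(cell_mem hx).1, (cell_mem hy).1]
    · exact e1
    · exact e2
  have := Set.ncard_le_ncard_of_injOn _ hmaps hinj (Finset.finite_toSet _)
  rw [Set.ncard_coe_finset, Finset.card_product, Int.card_Ico, Int.card_Ico] at this
  refine le_trans this ?_
  have e1 : ((4*v 1+4) - (4*v 1)).toNat = 4 := by omega
  have e2 : ((16*v 2+16) - (16*v 2)).toNat = 16 := by omega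
  rw [e1, e2]

end SailProof
namespace SailProof

/-- The proto-vertex whose cell contains `x`. -/
def vtxOf (x : V3) : V3 := ![x 0, x 1 / 4, x 2 / 16]

lemma cell_vtx {v x : V3} (h : x ∈ cell v) : vtxOf x = v := by
  obtain ⟨h0, h1, h2, h3, h4⟩ := cell_mem h
  funext j
  rcases fin3 j with rfl | rfl | rfl <;> simp [vtxOf] <;> omega

lemma count_main {L : ℕ} {b b' : BrickMap L} {Sh Sh' : Set V3}
    (hs : SurfData L Sh) (hs' : SurfData L Sh') (hL3 : 3 ≤ (L:ℤ))
    (I : Set V3) (hI : ∀ y ∈ I, ∃ v v', Sol b b' Sh Sh' y v v')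
    (lev : ℤ × ℤ → ℤ)
    (hrange : ∀ k k' : ℤ, 0 ≤ k → k < 2*(L:ℤ) → 0 ≤ k' → k' < 2*(L:ℤ) →
      -(2*(L:ℤ)) ≤ lev (k, k') ∧ lev (k, k') ≤ 4*(L:ℤ))
    (hchain : ∀ yA vA vA' yB vB vB', Sol b b' Sh Sh' yA vA vA' → Sol b b' Sh Sh' yB vB vB' →
      lev (vA 2, vA' 2) = lev (vB 2, vB' 2) →
      (vA 2 - vB 2 ≤ 100000 ∧
       (vA 0 - vA 1) - (vB 0 - vB 1) ≤ 100000 ∧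
       vA' 2 - vB' 2 ≤ 100000 ∧
       (vA' 0 - vA' 1) - (vB' 0 - vB' 1) ≤ 100000)) :
    I.ncard ≤ 64 * 200001^4 * (6*L+1) := by
  classical
  -- finiteness of I
  have hIfin : I.Finite := by
    have hsub : I ⊆ b.apply '' boxSet (fun _ => 0) ![4*L, 16*L, 32*L] := by
      intro y hy
      obtain ⟨v, v', hvS, hv'S, x, x', hx, hx', hyx, hyx'⟩ := hI y hy
      obtain ⟨p0, p1, p2, p3, p4, p5⟩ := proto_mem hs hvS
      obtain ⟨c0, c1, c2, c3, c4⟩ := cell_mem hx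
      refine ⟨x, ?_, hyx.symm⟩
      intro j
      rcases fin3 j with rfl | rfl | rfl <;> simp <;> omega
    exact ((boxSet_finite _ _).image _).subset hsub
  set Θ : V3 → ℤ := fun y => lev ((binv b y) 2 / 16, (binv b' y) 2 / 16) with hΘdef
  set Ψ : V3 → V3 × V3 := fun y => (vtxOf (binv b y), vtxOf (binv b' y)) with hΨdef
  have hvals : ∀ y v v', Sol b b' Sh Sh' y v v' → Ψ y = (v, v') ∧ Θ y = lev (v 2, v' 2) := by
    rintro y v v' ⟨hvS, hv'S, x, x', hx, hx', hyx, hyx'⟩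
    have e1 : binv b y = x := by rw [hyx]; exact binv_apply b x
    have e2 : binv b' y = x' := by rw [hyx']; exact binv_apply b' x'
    have l1 : x 2 / 16 = v 2 := by
      obtain ⟨_, _, _, h3, h4⟩ := cell_mem hx
      omega
    have l2 : x' 2 / 16 = v' 2 := by
      obtain ⟨_, _, _, h3, h4⟩ := cell_mem hx'
      omega
    constructor
    · rw [hΨdef]
      simp only
      rw [e1, e2, cell_vtx hx, cell_vtx hx']
    · rw [hΘdef]
      simp only
      rw [e1, e2, l1, l2]
  have hfibΘ : ∀ c : ℤ, (I ∩ Θ ⁻¹' {c}).ncard ≤ 64 * 200001^4 := by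
    intro c
    set Fc := I ∩ Θ ⁻¹' {c} with hFc
    have hFcI : Fc ⊆ I := Set.inter_subset_left
    have hFcfin : Fc.Finite := hIfin.subset hFcI
    have hfibΨ : ∀ q : V3 × V3, (Fc ∩ Ψ ⁻¹' {q}).ncard ≤ 64 := by
      intro q
      rcases (Fc ∩ Ψ ⁻¹' {q}).eq_empty_or_nonempty with he | ⟨y₀, hy₀⟩
      · rw [he]; simp
      · obtain ⟨v₀, v₀', hsol₀⟩ := hI y₀ (hFcI hy₀.1)
        have hq : q = (v₀, v₀') := by
          have := (hvals _ _ _ hsol₀).1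
          have hq' : Ψ y₀ = q := hy₀.2
          rw [← hq', this]
        have hsub2 : Fc ∩ Ψ ⁻¹' {q} ⊆ b.apply '' cell v₀ := by
          intro y hy
          obtain ⟨w, w', hsolw⟩ := hI y (hFcI hy.1)
          have hΨy : Ψ y = (w, w') := (hvals _ _ _ hsolw).1
          obtain ⟨hwS, hw'S, x, x', hx, hx', hyx, hyx'⟩ := hsolw
          have : (w, w') = (v₀, v₀') := by
            rw [← hΨy]
            have : Ψ y = q := hy.2
            rw [this, hq]
          have hw : w = v₀ := congrArg Prod.fst this
          exact ⟨x, hw ▸ hx, hyx.symm⟩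
        calc (Fc ∩ Ψ ⁻¹' {q}).ncard ≤ (b.apply '' cell v₀).ncard :=
              Set.ncard_le_ncard hsub2 ((cell_finite v₀).image _)
          _ ≤ (cell v₀).ncard := Set.ncard_image_le (cell_finite v₀)
          _ ≤ 64 := cell_ncard v₀
    have step1 : Fc.ncard ≤ 64 * (Ψ '' Fc).ncard :=
      ncard_le_mul_of_fiber Fc Ψ hFcfin 64 hfibΨ
    have step2 : (Ψ '' Fc).ncard ≤ 200001^4 := by
      have hcap := ncard_box_capture (Ψ '' Fc)
        (fun q => q.1 2) (fun q => q.1 0 - q.1 1)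
        (fun q => q.2 2) (fun q => q.2 0 - q.2 1) 100000 ?_ ?_
      · calc (Ψ '' Fc).ncard ≤ (2*100000+1)^4 := hcap
          _ = 200001^4 := by norm_num
      · -- injectivity
        rintro q1 ⟨yA, hyA, rfl⟩ q2 ⟨yB, hyB, rfl⟩ heq
        obtain ⟨vA, vA', hsolA⟩ := hI yA (hFcI hyA)
        obtain ⟨vB, vB', hsolB⟩ := hI yB (hFcI hyB)
        rw [(hvals _ _ _ hsolA).1, (hvals _ _ _ hsolB).1] at heq ⊢
        simp only [Prod.mk.injEq] at heq
        obtain ⟨e1, e2, e3, e4⟩ := heq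
        have hA := hs.offset_inj hsolA.1 hsolB.1 e1 e2
        have hB := hs'.offset_inj hsolA.2.1 hsolB.2.1 e3 e4
        rw [hA, hB]
      · -- bounds
        rintro q1 ⟨yA, hyA, rfl⟩ q2 ⟨yB, hyB, rfl⟩
        obtain ⟨vA, vA', hsolA⟩ := hI yA (hFcI hyA)
        obtain ⟨vB, vB', hsolB⟩ := hI yB (hFcI hyB)
        have hΘA : Θ yA = lev (vA 2, vA' 2) := (hvals _ _ _ hsolA).2
        have hΘB : Θ yB = lev (vB 2, vB' 2) := (hvals _ _ _ hsolB).2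
        have hcA : Θ yA = c := hyA.2
        have hcB : Θ yB = c := hyB.2
        have hlev : lev (vA 2, vA' 2) = lev (vB 2, vB' 2) := by rw [← hΘA, ← hΘB, hcA, hcB]
        have hbd := hchain yA vA vA' yB vB vB' hsolA hsolB hlev
        rw [(hvals _ _ _ hsolA).1, (hvals _ _ _ hsolB).1]
        exact ⟨hbd.1, hbd.2.1, hbd.2.2.1, hbd.2.2.2⟩
    calc Fc.ncard ≤ 64 * (Ψ '' Fc).ncard := step1
      _ ≤ 64 * 200001^4 := Nat.mul_le_mul_left _ step2
  have h1 : I.ncard ≤ (64 * 200001^4) * (Θ '' I).ncard :=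
    ncard_le_mul_of_fiber I Θ hIfin _ hfibΘ
  have h2 : (Θ '' I).ncard ≤ 6*L+1 := by
    have hsub : Θ '' I ⊆ ↑(Finset.Icc (-(2*(L:ℤ))) (4*(L:ℤ))) := by
      rintro _ ⟨y, hy, rfl⟩
      obtain ⟨v, v', hsol⟩ := hI y hy
      rw [(hvals _ _ _ hsol).2]
      obtain ⟨_, _, _, _, p4, p5⟩ := proto_mem hs hsol.1
      obtain ⟨_, _, _, _, q4, q5⟩ := proto_mem hs' hsol.2.1
      have := hrange (v 2) (v' 2) p4 p5 q4 q5
      simp only [Finset.coe_Icc, Set.mem_Icc]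
      exact this
    calc (Θ '' I).ncard ≤ (Finset.Icc (-(2*(L:ℤ))) (4*(L:ℤ))).card := by
          have := Set.ncard_le_ncard hsub (Finset.finite_toSet _)
          rwa [Set.ncard_coe_finset] at this
      _ = (4*(L:ℤ) + 1 - (-(2*(L:ℤ)))).toNat := Int.card_Icc _ _
      _ ≤ 6*L+1 := by omega
  calc I.ncard ≤ (64 * 200001^4) * (Θ '' I).ncard := h1
    _ ≤ (64 * 200001^4) * (6*L+1) := Nat.mul_le_mul_left _ h2

end SailProof
namespace SailProof

/-- Level function for the aligned case (`x'₀ ↔ x₀`). -/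
def levA (σ0 σ1 σ2 : ℤ) : ℤ × ℤ → ℤ := fun kk =>
  if σ0*σ2 = -1 then kk.1 else if σ0*σ1 = -1 then kk.2 else kk.1 + σ0*kk.2

lemma chainA {L : ℕ} {S S' : Set V3} (hs : SurfData L S) (hs' : SurfData L S')
    {σ0 σ1 σ2 c0 c1 c2 : ℤ}
    (h0 : σ0 = 1 ∨ σ0 = -1) (h1 : σ1 = 1 ∨ σ1 = -1) (h2 : σ2 = 1 ∨ σ2 = -1)
    {vA vA' vB vB' xA xA' xB xB' : V3}
    (hvA : vA ∈ S) (hvA' : vA' ∈ S') (hvB : vB ∈ S) (hvB' : vB' ∈ S')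
    (hxA : xA ∈ cell vA) (hxA' : xA' ∈ cell vA') (hxB : xB ∈ cell vB) (hxB' : xB' ∈ cell vB')
    (hA0 : xA' 0 = σ0 * xA 0 + c0) (hA1 : xA' 1 = σ1 * xA 2 + c1) (hA2 : xA' 2 = σ2 * xA 1 + c2)
    (hB0 : xB' 0 = σ0 * xB 0 + c0) (hB1 : xB' 1 = σ1 * xB 2 + c1) (hB2 : xB' 2 = σ2 * xB 1 + c2)
    (hlev : levA σ0 σ1 σ2 (vA 2, vA' 2) = levA σ0 σ1 σ2 (vB 2, vB' 2)) :
    vA 2 - vB 2 ≤ 100000 ∧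
    (vA 0 - vA 1) - (vB 0 - vB 1) ≤ 100000 ∧
    vA' 2 - vB' 2 ≤ 100000 ∧
    (vA' 0 - vA' 1) - (vB' 0 - vB' 1) ≤ 100000 := by
  obtain ⟨a0, a1, a2, a3, a4⟩ := cell_mem hxA
  obtain ⟨a0', a1', a2', a3', a4'⟩ := cell_mem hxA'
  obtain ⟨b0, b1, b2, b3, b4⟩ := cell_mem hxB
  obtain ⟨b0', b1', b2', b3', b4'⟩ := cell_mem hxB'
  rcases le_total (vA 2) (vB 2) with hk | hk <;>
    [obtain ⟨θ, hθ0, hθ1, hF⟩ := hs.cross hvA hvB hk;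
     obtain ⟨θ, hθ0, hθ1, hF⟩ := hs.cross hvB hvA hk] <;>
  (rcases le_total (vA' 2) (vB' 2) with hk' | hk' <;>
    [obtain ⟨θ', hθ'0, hθ'1, hF'⟩ := hs'.cross hvA' hvB' hk';
     obtain ⟨θ', hθ'0, hθ'1, hF'⟩ := hs'.cross hvB' hvA' hk']) <;>
  (rcases h0 with rfl | rfl <;> rcases h1 with rfl | rfl <;> rcases h2 with rfl | rfl <;>
    norm_num [levA] at hlev <;> omega)

lemma chainB {L : ℕ} {S S' : Set V3} (hs : SurfData L S) (hs' : SurfData L S')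
    {σ0 σ1 σ2 c0 c1 c2 : ℤ}
    (h0 : σ0 = 1 ∨ σ0 = -1) (h1 : σ1 = 1 ∨ σ1 = -1) (h2 : σ2 = 1 ∨ σ2 = -1)
    {vA vA' vB vB' xA xA' xB xB' : V3}
    (hvA : vA ∈ S) (hvA' : vA' ∈ S') (hvB : vB ∈ S) (hvB' : vB' ∈ S')
    (hxA : xA ∈ cell vA) (hxA' : xA' ∈ cell vA') (hxB : xB ∈ cell vB) (hxB' : xB' ∈ cell vB')
    (hA0 : xA' 0 = σ0 * xA 1 + c0) (hA1 : xA' 1 = σ1 * xA 2 + c1) (hA2 : xA' 2 = σ2 * xA 0 + c2)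
    (hB0 : xB' 0 = σ0 * xB 1 + c0) (hB1 : xB' 1 = σ1 * xB 2 + c1) (hB2 : xB' 2 = σ2 * xB 0 + c2)
    (hlev : vA 2 = vB 2) :
    vA 2 - vB 2 ≤ 100000 ∧
    (vA 0 - vA 1) - (vB 0 - vB 1) ≤ 100000 ∧
    vA' 2 - vB' 2 ≤ 100000 ∧
    (vA' 0 - vA' 1) - (vB' 0 - vB' 1) ≤ 100000 := by
  obtain ⟨a0, a1, a2, a3, a4⟩ := cell_mem hxA
  obtain ⟨a0', a1', a2', a3', a4'⟩ := cell_mem hxA'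
  obtain ⟨b0, b1, b2, b3, b4⟩ := cell_mem hxB
  obtain ⟨b0', b1', b2', b3', b4'⟩ := cell_mem hxB'
  have hk : vA 2 ≤ vB 2 := le_of_eq hlev
  obtain ⟨θ, hθ0, hθ1, hF⟩ := hs.cross hvA hvB hk
  rcases le_total (vA' 2) (vB' 2) with hk' | hk' <;>
    [obtain ⟨θ', hθ'0, hθ'1, hF'⟩ := hs'.cross hvA' hvB' hk';
     obtain ⟨θ', hθ'0, hθ'1, hF'⟩ := hs'.cross hvB' hvA' hk'] <;>
  (rcases h0 with rfl | rfl <;> rcases h1 with rfl | rfl <;> rcases h2 with rfl | rfl <;> omega)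

end SailProof
open SailProof in
theorem sail_intersection_bound :
    ∃ C : ℕ, ∀ (L : ℕ) (sus : Set V3) (η : V3 → Bool) (b b' : BrickMap L)
      (sail₀ sail₀' : Set V3),
    GoodBrick b sus η sail₀ → GoodBrick b' sus η sail₀' → Points b b' →
    (sailSites b sail₀ ∩ sailSites b' sail₀').ncard ≤ C * L := by
  refine ⟨64 * 200001^4 * 7, ?_⟩
  intro L sus η b b' sail₀ sail₀' hb hb' hpts
  obtain ⟨Sh, hs, hsub, hL3⟩ := goodExtract hb
  obtain ⟨Sh', hs', hsub', _⟩ := goodExtract hb'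
  have hLn : 3 ≤ L := by exact_mod_cast hL3
  obtain ⟨kp, hkp4, hPA⟩ := hpts
  have hπ1 : b.perm.symm (b'.perm 1) = 2 := tip_sec_perm (by omega) hkp4 hPA
  have hinj : ∀ j j' : Fin 3, b.perm.symm (b'.perm j) = b.perm.symm (b'.perm j') → j = j' :=
    fun j j' h => b'.perm.injective (b.perm.symm.injective h)
  -- the intersection set and its solutions
  set I := sailSites b sail₀ ∩ sailSites b' sail₀' with hIdef
  have hI : ∀ y ∈ I, ∃ v v', Sol b b' Sh Sh' y v v' := by
    rintro y ⟨⟨x, hx, rfl⟩, ⟨x', hx', hyx'⟩⟩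
    obtain ⟨v, hv, hcell⟩ := hsub x hx
    obtain ⟨v', hv', hcell'⟩ := hsub' x' hx'
    exact ⟨v, v', hv, hv', x, x', hcell, hcell', rfl, hyx'.symm⟩
  -- coordinate relations
  have hrel : ∀ j : Fin 3, ∃ s c : ℤ, (s = 1 ∨ s = -1) ∧
      ∀ x x' : V3, b.apply x = b'.apply x' →
        x' j = s * x (b.perm.symm (b'.perm j)) + c := by
    intro j
    refine ⟨_, _, ?_, fun x x' h => comp_coord b b' x x' h j⟩
    rcases bsgn_cases b' (b'.perm j) with h | h <;> rcases bsgn_cases b (b'.perm j) with h' | h' <;>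
      rw [h, h'] <;> norm_num
  obtain ⟨σ0, c0, hσ0, hrel0⟩ := hrel 0
  obtain ⟨σ1, c1, hσ1, hrel1⟩ := hrel 1
  obtain ⟨σ2, c2, hσ2, hrel2⟩ := hrel 2
  rw [hπ1] at hrel1
  have hfinish : I.ncard ≤ 64 * 200001^4 * (6*L+1) → I.ncard ≤ 64 * 200001^4 * 7 * L := by
    intro h
    refine le_trans h ?_
    have h67 : 6*L+1 ≤ 7*L := by omega
    calc 64 * 200001^4 * (6*L+1) ≤ 64 * 200001^4 * (7*L) := Nat.mul_le_mul_left _ h67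
      _ = 64 * 200001^4 * 7 * L := by ring
  rcases fin3 (b.perm.symm (b'.perm 0)) with hπ0 | hπ0 | hπ0
  · -- case A : π 0 = 0, so π 2 = 1
    have hπ2 : b.perm.symm (b'.perm 2) = 1 := by
      rcases fin3 (b.perm.symm (b'.perm 2)) with h | h | h
      · exact absurd (hinj 2 0 (h.trans hπ0.symm)) (by decide)
      · exact h
      · exact absurd (hinj 2 1 (h.trans hπ1.symm)) (by decide)
    rw [hπ0] at hrel0
    rw [hπ2] at hrel2
    apply hfinish
    apply count_main hs hs' hL3 I hI (levA σ0 σ1 σ2)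
    · intro k k' hk1 hk2 hk3 hk4
      rcases hσ0 with rfl | rfl <;> rcases hσ1 with h1 | h1 <;> rcases hσ2 with h2 | h2 <;>
        simp only [levA, h1, h2] <;> norm_num <;> omega
    · intro yA vA vA' yB vB vB' hsolA hsolB hlev
      obtain ⟨hvAS, hvA'S, xA, xA', hxA, hxA', hyA, hyA'⟩ := hsolA
      obtain ⟨hvBS, hvB'S, xB, xB', hxB, hxB', hyB, hyB'⟩ := hsolB
      have hA := hyA.symm.trans hyA'
      have hB := hyB.symm.trans hyB'
      exact chainA hs hs' hσ0 hσ1 hσ2 hvAS hvA'S hvBS hvB'S hxA hxA' hxB hxB'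
        (hrel0 xA xA' hA) (hrel1 xA xA' hA) (hrel2 xA xA' hA)
        (hrel0 xB xB' hB) (hrel1 xB xB' hB) (hrel2 xB xB' hB) hlev
  · -- case B : π 0 = 1, so π 2 = 0
    have hπ2 : b.perm.symm (b'.perm 2) = 0 := by
      rcases fin3 (b.perm.symm (b'.perm 2)) with h | h | h
      · exact h
      · exact absurd (hinj 2 0 (h.trans hπ0.symm)) (by decide)
      · exact absurd (hinj 2 1 (h.trans hπ1.symm)) (by decide)
    rw [hπ0] at hrel0
    rw [hπ2] at hrel2
    apply hfinish
    apply count_main hs hs' hL3 I hI (fun kk => kk.1)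
    · intro k k' hk1 hk2 hk3 hk4
      constructor <;> simp <;> omega
    · intro yA vA vA' yB vB vB' hsolA hsolB hlev
      obtain ⟨hvAS, hvA'S, xA, xA', hxA, hxA', hyA, hyA'⟩ := hsolA
      obtain ⟨hvBS, hvB'S, xB, xB', hxB, hxB', hyB, hyB'⟩ := hsolB
      have hA := hyA.symm.trans hyA'
      have hB := hyB.symm.trans hyB'
      exact chainB hs hs' hσ0 hσ1 hσ2 hvAS hvA'S hvBS hvB'S hxA hxA' hxB hxB'
        (hrel0 xA xA' hA) (hrel1 xA xA' hA) (hrel2 xA xA' hA)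
        (hrel0 xB xB' hB) (hrel1 xB xB' hB) (hrel2 xB xB' hB) hlev
  · -- impossible: π 0 = 2 = π 1
    exact absurd (hinj 0 1 (hπ0.trans hπ1.symm)) (by decide)
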